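/- arXiv:1907.02913 — 7 statements merged into one kernel-verified Lean document; each statement's English description precedes it below -/
import Mathlib

section
/- A continuous map f on a compact metric space X has mean ergodic shadowing if and only if for every ε > 0 there exists δ > 0 such that for every δ-ergodic pseudo orbit {x_i} there is a point x in X with d(f^i(x), x_i) < ε for all i in ℕ except a set of upper density less than ε. -/
/-!
Both notions compare the distances `a i = d(f^i p, ξ i)`, which take values in `[0, diam X]`,
against a threshold, so the equivalence holds for any bounded nonnegative sequence. Markov's
inequality `ε · #{i < n | ε ≤ a i} ≤ ∑_{i<n} a i` turns a small Cesàro mean into a small upper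
density of the bad set, and conversely `a i ≤ η + diam X · 1[η ≤ a i]` turns a small upper
density into a small Cesàro mean.
-/

open Filter Metric

noncomputable def cnt (E : Set ℕ) (n : ℕ) : ℝ :=
  ∑ i ∈ Finset.range n, Set.indicator E (fun _ => (1 : ℝ)) i

def DensityZero (E : Set ℕ) : Prop :=
  Filter.Tendsto (fun n : ℕ => cnt E n / n) Filter.atTop (nhds 0)

noncomputable def upperDensity (E : Set ℕ) : ℝ :=
  Filter.limsup (fun n : ℕ => cnt E n / n) Filter.atTop

noncomputable def lowerDensity (E : Set ℕ) : ℝ :=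
  Filter.liminf (fun n : ℕ => cnt E n / n) Filter.atTop

variable {X : Type*}

def ErgodicPseudoOrbit [MetricSpace X] (f : X → X) (δ : ℝ) (ξ : ℕ → X) : Prop :=
  DensityZero {i | δ ≤ dist (f (ξ i)) (ξ (i + 1))}

def AvgShadows [MetricSpace X] (f : X → X) (ε : ℝ) (p : X) (ξ : ℕ → X) : Prop :=
  Filter.limsup (fun n : ℕ => (∑ i ∈ Finset.range n, dist (f^[i] p) (ξ i)) / n) Filter.atTop < ε

def MeanErgodicShadowingAvg [MetricSpace X] (f : X → X) : Prop :=
  ∀ ε > 0, ∃ δ > 0, ∀ ξ : ℕ → X, ErgodicPseudoOrbit f δ ξ → ∃ p : X, AvgShadows f ε p ξ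

def MeanErgodicShadowingDens [MetricSpace X] (f : X → X) : Prop :=
  ∀ ε > 0, ∃ δ > 0, ∀ ξ : ℕ → X, ErgodicPseudoOrbit f δ ξ →
    ∃ p : X, upperDensity {i | ε ≤ dist (f^[i] p) (ξ i)} < ε

def Shadowing [MetricSpace X] (f : X → X) : Prop :=
  ∀ ε > 0, ∃ δ > 0, ∀ ξ : ℕ → X, (∀ i, dist (f (ξ i)) (ξ (i + 1)) < δ) →
    ∃ p : X, ∀ i, dist (f^[i] p) (ξ i) < ε

open Finset

theorem limsup_le_apply_limsup {ι R S : Type*} [ConditionallyCompleteLinearOrder R]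
    [TopologicalSpace R] [OrderTopology R] [ConditionallyCompleteLinearOrder S]
    [TopologicalSpace S] [OrderTopology S] {F : Filter ι} [NeBot F] {u : ι → R} {v : ι → S}
    {g : R → S} (hg : Monotone g) (hgc : Continuous g) (hu : F.IsBoundedUnder (· ≤ ·) u)
    (hu' : F.IsBoundedUnder (· ≥ ·) u) (hv : F.IsBoundedUnder (· ≥ ·) v)
    (hvu : ∀ᶠ i in F, v i ≤ g (u i)) :
    limsup v F ≤ g (limsup u F) :=
  calc limsup v F ≤ limsup (g ∘ u) F :=
        limsup_le_limsup hvu hv.isCoboundedUnder_le (hg.isBoundedUnder_le_comp hu)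
    _ = g (limsup u F) :=
        (hg.map_limsup_of_continuousAt u hgc.continuousAt hu hu'.isCoboundedUnder_le).symm

theorem sum_range_div_mem_Icc {a : ℕ → ℝ} {D : ℝ} (ha : ∀ i, a i ∈ Set.Icc 0 D) (n : ℕ) :
    (∑ i ∈ range n, a i) / n ∈ Set.Icc 0 D := by
  rcases Nat.eq_zero_or_pos n with rfl | hn
  · simpa using (ha 0).1.trans (ha 0).2
  refine ⟨div_nonneg (sum_nonneg fun i _ => (ha i).1) n.cast_nonneg, ?_⟩
  rw [div_le_iff₀ (by exact_mod_cast hn)]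
  simpa [mul_comm] using sum_le_card_nsmul (range n) a D fun i _ => (ha i).2

theorem indicator_one_mem_Icc (E : Set ℕ) (i : ℕ) :
    E.indicator (fun _ => (1 : ℝ)) i ∈ Set.Icc 0 1 := by
  by_cases hi : i ∈ E <;> simp [hi]

theorem isBoundedUnder_le_sum_range_div {a : ℕ → ℝ} {D : ℝ} (ha : ∀ i, a i ∈ Set.Icc 0 D) :
    atTop.IsBoundedUnder (· ≤ ·) fun n : ℕ => (∑ i ∈ range n, a i) / n :=
  isBoundedUnder_of ⟨D, fun n => (sum_range_div_mem_Icc ha n).2⟩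

theorem isBoundedUnder_ge_sum_range_div {a : ℕ → ℝ} {D : ℝ} (ha : ∀ i, a i ∈ Set.Icc 0 D) :
    atTop.IsBoundedUnder (· ≥ ·) fun n : ℕ => (∑ i ∈ range n, a i) / n :=
  isBoundedUnder_of ⟨0, fun n => (sum_range_div_mem_Icc ha n).1⟩

theorem mul_cnt_le_sum {a : ℕ → ℝ} (ha : ∀ i, 0 ≤ a i) (ε : ℝ) (n : ℕ) :
    ε * cnt {i | ε ≤ a i} n ≤ ∑ i ∈ range n, a i := by
  rw [cnt, mul_sum]
  refine sum_le_sum fun i _ => ?_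
  by_cases hi : ε ≤ a i <;> simp [hi, ha i]

theorem sum_le_mul_add_mul_cnt {a : ℕ → ℝ} {D η : ℝ} (ha : ∀ i, a i ≤ D) (hη : 0 ≤ η) (n : ℕ) :
    ∑ i ∈ range n, a i ≤ n * η + D * cnt {i | η ≤ a i} n := by
  calc ∑ i ∈ range n, a i ≤ ∑ i ∈ range n, (η + D * {i | η ≤ a i}.indicator (fun _ => 1) i) := by
        refine sum_le_sum fun i _ => ?_
        by_cases hi : η ≤ a i
        · simpa [hi] using (ha i).trans (le_add_of_nonneg_left hη)
        · simpa [hi] using (not_le.mp hi).le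
    _ = n * η + D * cnt {i | η ≤ a i} n := by simp [sum_add_distrib, ← mul_sum, cnt]

theorem upperDensity_le_limsup_div {a : ℕ → ℝ} {D ε : ℝ} (ha : ∀ i, a i ∈ Set.Icc 0 D)
    (hε : 0 < ε) :
    upperDensity {i | ε ≤ a i} ≤ limsup (fun n : ℕ => (∑ i ∈ range n, a i) / n) atTop / ε := by
  refine limsup_le_apply_limsup (g := (· / ε)) (fun x y hxy => div_le_div_of_nonneg_right hxy hε.le)
    (continuous_id.div_const ε) (isBoundedUnder_le_sum_range_div ha)
    (isBoundedUnder_ge_sum_range_div ha)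
    (isBoundedUnder_ge_sum_range_div fun i => indicator_one_mem_Icc _ i) (Eventually.of_forall ?_)
  intro n
  have hmarkov : cnt {i | ε ≤ a i} n ≤ (∑ i ∈ range n, a i) / ε := by
    rw [le_div_iff₀ hε, mul_comm]
    exact mul_cnt_le_sum (fun i => (ha i).1) ε n
  simpa only [div_right_comm] using div_le_div_of_nonneg_right hmarkov n.cast_nonneg

theorem limsup_le_add_mul_upperDensity {a : ℕ → ℝ} {D η : ℝ} (ha : ∀ i, a i ∈ Set.Icc 0 D)
    (hη : 0 ≤ η) :
    limsup (fun n : ℕ => (∑ i ∈ range n, a i) / n) atTop ≤ η + D * upperDensity {i | η ≤ a i} := by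
  have hD : 0 ≤ D := (ha 0).1.trans (ha 0).2
  refine limsup_le_apply_limsup (g := fun x => η + D * x)
    (fun x y hxy => by dsimp only; gcongr) (by fun_prop)
    (isBoundedUnder_le_sum_range_div fun i => indicator_one_mem_Icc _ i)
    (isBoundedUnder_ge_sum_range_div fun i => indicator_one_mem_Icc _ i)
    (isBoundedUnder_ge_sum_range_div ha) ?_
  filter_upwards [eventually_gt_atTop 0] with n hn
  have hn' : (0 : ℝ) < n := by exact_mod_cast hn
  rw [div_le_iff₀ hn', add_mul, mul_assoc, div_mul_cancel₀ _ hn'.ne', mul_comm η]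
  exact sum_le_mul_add_mul_cnt (fun i => (ha i).2) hη n

theorem stmt0_general {X : Type*} [MetricSpace X] [CompactSpace X] (f : X → X) :
    MeanErgodicShadowingAvg f ↔ MeanErgodicShadowingDens f := by
  set D := diam (Set.univ : Set X)
  have hdist : ∀ (p : X) (ξ : ℕ → X) i, dist (f^[i] p) (ξ i) ∈ Set.Icc 0 D := fun p ξ i =>
    ⟨dist_nonneg, dist_le_diam_of_mem isCompact_univ.isBounded (Set.mem_univ _) (Set.mem_univ _)⟩
  constructor
  · intro h ε hε
    obtain ⟨δ, hδ, hshadow⟩ := h (ε * ε) (mul_pos hε hε)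
    refine ⟨δ, hδ, fun ξ hξ => ?_⟩
    obtain ⟨p, hp⟩ := hshadow ξ hξ
    refine ⟨p, (upperDensity_le_limsup_div (hdist p ξ) hε).trans_lt ?_⟩
    rwa [div_lt_iff₀ hε]
  · intro h ε hε
    have hD : 0 ≤ D := diam_nonneg
    obtain ⟨η, hη, hηε⟩ : ∃ η > 0, (D + 1) * η < ε :=
      ⟨ε / (2 * (D + 1)), by positivity, by field_simp; linarith⟩
    obtain ⟨δ, hδ, hshadow⟩ := h η hη
    refine ⟨δ, hδ, fun ξ hξ => ?_⟩
    obtain ⟨p, hp⟩ := hshadow ξ hξ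
    refine ⟨p, (limsup_le_add_mul_upperDensity (hdist p ξ) hη.le).trans_lt ?_⟩
    calc η + D * upperDensity {i | η ≤ dist (f^[i] p) (ξ i)} ≤ (D + 1) * η := by
          nlinarith [mul_le_mul_of_nonneg_left hp.le hD]
      _ < ε := hηε

theorem stmt0 {X : Type*} [MetricSpace X] [CompactSpace X] (f : X → X) (hf : Continuous f) :
    MeanErgodicShadowingAvg f ↔ MeanErgodicShadowingDens f :=
  stmt0_general f
end

section
/- If H : X → Y is a homeomorphism between compact metric spaces, f : X → X is continuous, and g = H ∘ f ∘ H⁻¹, then g has mean ergodic shadowing if and only if f has mean ergodic shadowing. -/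
open Filter Metric

variable {X : Type*}

/-!
On compact spaces `H` and `H⁻¹` are uniformly continuous. A uniformly continuous `ψ` into a
bounded space is uniformly continuous in Cesàro mean: where `dist x x' ≥ η` the distance
`dist (ψ x) (ψ x')` is at most `diam Y ≤ (diam Y / η) * dist x x'`, so small average distances
are mapped to small average distances. Hence `H⁻¹` maps ergodic pseudo orbits of `g` to ergodic
pseudo orbits of `f`, and `H` maps an average shadow of `H⁻¹ ∘ ξ` to an average shadow of `ξ`.
-/

open Finset Function

lemma densityZero_mono {E F : Set ℕ} (h : E ⊆ F) (hF : DensityZero F) : DensityZero E := by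
  refine squeeze_zero (fun n => ?_) (fun n => ?_) hF
  · exact div_nonneg (sum_nonneg fun i _ => Set.indicator_nonneg (fun _ _ => zero_le_one) i)
      n.cast_nonneg
  · have hle : cnt E n ≤ cnt F n :=
      sum_le_sum fun i _ => Set.indicator_le_indicator_of_subset h (fun _ => zero_le_one) i
    gcongr

lemma avg_le_mul_avg_add {u v : ℕ → ℝ} {K c : ℝ} (hc : 0 ≤ c) (h : ∀ i, u i ≤ K * v i + c)
    (n : ℕ) : (∑ i ∈ range n, u i) / n ≤ K * ((∑ i ∈ range n, v i) / n) + c := by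
  have hsum : ∑ i ∈ range n, u i ≤ K * ∑ i ∈ range n, v i + n * c := by
    simpa [sum_add_distrib, mul_sum] using sum_le_sum fun i (_ : i ∈ range n) => h i
  calc (∑ i ∈ range n, u i) / n ≤ (K * ∑ i ∈ range n, v i + n * c) / n := by gcongr
    _ = K * ((∑ i ∈ range n, v i) / n) + n * c / n := by ring
    _ ≤ K * ((∑ i ∈ range n, v i) / n) + c := by
      gcongr
      rcases n.eq_zero_or_pos with rfl | hn
      · simpa using hc
      · rw [mul_div_cancel_left₀ c (by positivity)]

lemma isBoundedUnder_avg {v : ℕ → ℝ} {C : ℝ} (hC : 0 ≤ C) (h : ∀ i, v i ≤ C) :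
    IsBoundedUnder (· ≤ ·) atTop fun n : ℕ => (∑ i ∈ range n, v i) / n :=
  isBoundedUnder_of ⟨C, fun n => by
    simpa using avg_le_mul_avg_add (v := v) hC (K := 0) (by simpa using h) n⟩

section Metric

variable {Y : Type*} [PseudoMetricSpace X] [PseudoMetricSpace Y]

lemma dist_le_diam_div_mul_dist_add [BoundedSpace Y] {ψ : X → Y} {η c : ℝ} (hη : 0 < η)
    (hψ : ∀ x x', dist x x' < η → dist (ψ x) (ψ x') < c) (x x' : X) :
    dist (ψ x) (ψ x') ≤ diam (Set.univ : Set Y) / η * dist x x' + c := by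
  have hdiam : dist (ψ x) (ψ x') ≤ diam (Set.univ : Set Y) :=
    dist_le_diam_of_mem (Bornology.IsBounded.all _) trivial trivial
  rcases lt_or_ge (dist x x') η with hlt | hge
  · have : 0 ≤ diam (Set.univ : Set Y) / η * dist x x' := by positivity
    linarith [hψ x x' hlt]
  · have : diam (Set.univ : Set Y) ≤ diam (Set.univ : Set Y) / η * dist x x' := by
      rw [div_mul_eq_mul_div, le_div_iff₀ hη]
      exact mul_le_mul_of_nonneg_left hge diam_nonneg
    linarith [dist_nonneg.trans_lt (hψ x x (by simpa using hη))]

lemma UniformContinuous.exists_limsup_avg_dist_lt [BoundedSpace X] [BoundedSpace Y] {ψ : X → Y}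
    (hψ : UniformContinuous ψ) {ε : ℝ} (hε : 0 < ε) :
    ∃ ε' > 0, ∀ a b : ℕ → X,
      limsup (fun n : ℕ => (∑ i ∈ range n, dist (a i) (b i)) / n) atTop < ε' →
      limsup (fun n : ℕ => (∑ i ∈ range n, dist (ψ (a i)) (ψ (b i))) / n) atTop < ε := by
  obtain ⟨η, hη, hψη⟩ := uniformContinuous_iff.mp hψ (ε / 2) (half_pos hε)
  set C := diam (Set.univ : Set Y)
  have hC : 0 ≤ C := diam_nonneg
  refine ⟨ε * η / (2 * (C + 1)), by positivity, fun a b hab => ?_⟩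
  have hab' := eventually_lt_of_limsup_lt hab <| isBoundedUnder_avg diam_nonneg fun i =>
    dist_le_diam_of_mem (Bornology.IsBounded.all Set.univ) trivial trivial
  have hbound : ∀ᶠ n : ℕ in atTop, (∑ i ∈ range n, dist (ψ (a i)) (ψ (b i))) / n ≤
      C / η * (ε * η / (2 * (C + 1))) + ε / 2 := by
    filter_upwards [hab'] with n hn
    refine (avg_le_mul_avg_add (half_pos hε).le
      (fun i => dist_le_diam_div_mul_dist_add hη hψη (a i) (b i)) n).trans ?_
    gcongr
  have hcobdd : IsCoboundedUnder (· ≤ ·) atTop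
      fun n : ℕ => (∑ i ∈ range n, dist (ψ (a i)) (ψ (b i))) / n :=
    isCoboundedUnder_le_of_le atTop (x := 0) fun n => by positivity
  calc _ ≤ C / η * (ε * η / (2 * (C + 1))) + ε / 2 := limsup_le_of_le hcobdd hbound
    _ = C / (C + 1) * (ε / 2) + ε / 2 := by field_simp
    _ < ε := by
      have : C / (C + 1) < 1 := (div_lt_one (by linarith)).mpr (by linarith)
      nlinarith

end Metric

section Conjugacy

variable {Y : Type*} [MetricSpace X] [MetricSpace Y]

lemma UniformContinuous.exists_ergodicPseudoOrbit_comp {f : X → X} {g : Y → Y} {φ : Y → X}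
    (hφ : UniformContinuous φ) (hφgf : Semiconj φ g f) {δ' : ℝ} (hδ' : 0 < δ') :
    ∃ δ > 0, ∀ ξ : ℕ → Y, ErgodicPseudoOrbit g δ ξ → ErgodicPseudoOrbit f δ' (φ ∘ ξ) := by
  obtain ⟨δ, hδ, hφδ⟩ := uniformContinuous_iff.mp hφ δ' hδ'
  refine ⟨δ, hδ, fun ξ hξ => densityZero_mono (fun i hi => ?_) hξ⟩
  simp only [Set.mem_ofPred_eq, comp_apply, ← hφgf.eq] at hi ⊢
  by_contra! hlt
  exact (hφδ hlt).not_ge hi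

theorem MeanErgodicShadowingAvg.conj [BoundedSpace X] [BoundedSpace Y] {f : X → X}
    (H : X ≃ Y) (hH : UniformContinuous H) (hH' : UniformContinuous H.symm)
    (hf : MeanErgodicShadowingAvg f) : MeanErgodicShadowingAvg fun y : Y => H (f (H.symm y)) := by
  intro ε hε
  obtain ⟨ε', hε', hHε'⟩ := hH.exists_limsup_avg_dist_lt hε
  obtain ⟨δ', hδ', hfδ'⟩ := hf ε' hε'
  obtain ⟨δ, hδ, hδδ'⟩ :=
    hH'.exists_ergodicPseudoOrbit_comp (f := f) (g := fun y => H (f (H.symm y)))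
      (fun y => by simp) hδ'
  refine ⟨δ, hδ, fun ξ hξ => ?_⟩
  obtain ⟨p, hp⟩ := hfδ' _ (hδδ' ξ hξ)
  have hHf : Semiconj H f fun y => H (f (H.symm y)) := fun x => by simp
  refine ⟨H p, ?_⟩
  simpa [AvgShadows, (hHf.iterate_right _).eq] using hHε' _ _ hp

end Conjugacy

theorem stmt1_general {X Y : Type*} [MetricSpace X] [CompactSpace X] [MetricSpace Y] [CompactSpace Y]
    (f : X → X) (H : X ≃ₜ Y) :
    MeanErgodicShadowingAvg (fun y : Y => H (f (H.symm y))) ↔ MeanErgodicShadowingAvg f := by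
  have hH := CompactSpace.uniformContinuous_of_continuous H.continuous
  have hH' := CompactSpace.uniformContinuous_of_continuous H.symm.continuous
  refine ⟨fun hg => ?_, fun hf => hf.conj H.toEquiv hH hH'⟩
  simpa using hg.conj H.symm.toEquiv hH' hH

theorem stmt1 {X Y : Type*} [MetricSpace X] [CompactSpace X] [MetricSpace Y] [CompactSpace Y]
    (f : X → X) (hf : Continuous f) (H : X ≃ₜ Y) :
    MeanErgodicShadowingAvg (fun y : Y => H (f (H.symm y))) ↔ MeanErgodicShadowingAvg f :=
  stmt1_general f H
end

section
/- If f : X → X and g : Y → Y are continuous maps on compact metric spaces each having mean ergodic shadowing, then the product map f × g on X × Y (with the max metric) has mean ergodic shadowing. -/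
open Filter Metric

variable {X : Type*}

/-!
Apply both hypotheses with tolerance `ε / 2`. Since the max metric dominates both coordinate
distances, a `min δ₁ δ₂`-ergodic pseudo orbit of `f × g` projects to a `δ₁`-ergodic pseudo orbit
of `f` and a `δ₂`-ergodic pseudo orbit of `g`. If `p` and `q` shadow these in average, then
`(p, q)` shadows the original one in average with error below `ε`: the max of the coordinate
distances is at most their sum, and on bounded spaces the averages are bounded, so the limsup of
their sum is at most the sum of their limsups.
-/

lemma cnt_nonneg (E : Set ℕ) (n : ℕ) : 0 ≤ cnt E n :=
  Finset.sum_nonneg fun i _ => Set.indicator_nonneg (fun _ _ => zero_le_one) i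

lemma cnt_mono {E F : Set ℕ} (h : F ⊆ E) (n : ℕ) : cnt F n ≤ cnt E n :=
  Finset.sum_le_sum fun i _ => Set.indicator_le_indicator_of_subset h (fun _ => zero_le_one) i

lemma DensityZero.mono {E F : Set ℕ} (h : F ⊆ E) (hE : DensityZero E) : DensityZero F :=
  squeeze_zero (fun n => div_nonneg (cnt_nonneg F n) n.cast_nonneg)
    (fun n => div_le_div_of_nonneg_right (cnt_mono h n) n.cast_nonneg) hE

section PseudoOrbit

variable {Y : Type*} [MetricSpace X] [MetricSpace Y]

lemma ErgodicPseudoOrbit.mono {f : X → X} {δ δ' : ℝ} {ξ : ℕ → X} (hδ : δ ≤ δ')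
    (hξ : ErgodicPseudoOrbit f δ ξ) : ErgodicPseudoOrbit f δ' ξ :=
  DensityZero.mono (fun _ hi => hδ.trans hi) hξ

lemma ErgodicPseudoOrbit.fst {f : X → X} {g : Y → Y} {δ : ℝ} {ξ : ℕ → X × Y}
    (hξ : ErgodicPseudoOrbit (Prod.map f g) δ ξ) :
    ErgodicPseudoOrbit f δ fun i => (ξ i).1 := by
  refine DensityZero.mono (fun i (hi : δ ≤ _) => ?_) hξ
  exact hi.trans (le_max_left _ _)

lemma ErgodicPseudoOrbit.snd {f : X → X} {g : Y → Y} {δ : ℝ} {ξ : ℕ → X × Y}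
    (hξ : ErgodicPseudoOrbit (Prod.map f g) δ ξ) :
    ErgodicPseudoOrbit g δ fun i => (ξ i).2 := by
  refine DensityZero.mono (fun i (hi : δ ≤ _) => ?_) hξ
  exact hi.trans (le_max_right _ _)

end PseudoOrbit

lemma sum_range_div_mem_Icc_s2 {a : ℕ → ℝ} {C : ℝ} (h0 : ∀ i, 0 ≤ a i) (hC : ∀ i, a i ≤ C)
    (n : ℕ) : 0 ≤ (∑ i ∈ Finset.range n, a i) / n ∧ (∑ i ∈ Finset.range n, a i) / n ≤ C := by
  refine ⟨div_nonneg (Finset.sum_nonneg fun i _ => h0 i) n.cast_nonneg, ?_⟩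
  rcases n.eq_zero_or_pos with rfl | hn
  · simpa using (h0 0).trans (hC 0)
  rw [div_le_iff₀ (by exact_mod_cast hn)]
  calc ∑ i ∈ Finset.range n, a i ≤ ∑ _i ∈ Finset.range n, C := Finset.sum_le_sum fun i _ => hC i
    _ = C * n := by simp [mul_comm]

-- The bounds matter: `limsup` of an unbounded real sequence is a junk value.
lemma limsup_le_limsup_add_limsup {u v w : ℕ → ℝ} {C : ℝ} (hw : ∀ n, 0 ≤ w n)
    (hwuv : ∀ n, w n ≤ u n + v n) (hu : ∀ n, 0 ≤ u n ∧ u n ≤ C) (hv : ∀ n, 0 ≤ v n ∧ v n ≤ C) :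
    limsup w atTop ≤ limsup u atTop + limsup v atTop := by
  have hu_ge : IsBoundedUnder (· ≥ ·) atTop u := isBoundedUnder_of ⟨0, fun n => (hu n).1⟩
  have hv_ge : IsBoundedUnder (· ≥ ·) atTop v := isBoundedUnder_of ⟨0, fun n => (hv n).1⟩
  calc limsup w atTop ≤ limsup (u + v) atTop :=
        limsup_le_limsup (.of_forall hwuv) (isBoundedUnder_of ⟨0, hw⟩).isCoboundedUnder_le
          (isBoundedUnder_of ⟨C + C, fun n => add_le_add (hu n).2 (hv n).2⟩)
    _ ≤ limsup u atTop + limsup v atTop :=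
        limsup_add_le hu_ge (isBoundedUnder_of ⟨C, fun n => (hu n).2⟩) hv_ge.isCoboundedUnder_le
          (isBoundedUnder_of ⟨C, fun n => (hv n).2⟩)

lemma AvgShadows.prodMap {X Y : Type*} [MetricSpace X] [BoundedSpace X] [MetricSpace Y]
    [BoundedSpace Y] {f : X → X} {g : Y → Y} {ε ε' : ℝ} {p : X} {q : Y} {ξ : ℕ → X × Y}
    (hp : AvgShadows f ε p fun i => (ξ i).1) (hq : AvgShadows g ε' q fun i => (ξ i).2) :
    AvgShadows (Prod.map f g) (ε + ε') (p, q) ξ := by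
  set C := max (diam (Set.univ : Set X)) (diam (Set.univ : Set Y))
  have hX (a b : X) : dist a b ≤ C :=
    le_max_of_le_left (dist_le_diam_of_mem BoundedSpace.bounded_univ trivial trivial)
  have hY (a b : Y) : dist a b ≤ C :=
    le_max_of_le_right (dist_le_diam_of_mem BoundedSpace.bounded_univ trivial trivial)
  refine lt_of_le_of_lt ?_ (add_lt_add hp hq)
  refine limsup_le_limsup_add_limsup
    (fun n => div_nonneg (Finset.sum_nonneg fun _ _ => dist_nonneg) n.cast_nonneg)
    (fun n => ?_) (sum_range_div_mem_Icc_s2 (fun _ => dist_nonneg) (fun _ => hX _ _))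
    (sum_range_div_mem_Icc_s2 (fun _ => dist_nonneg) (fun _ => hY _ _))
  rw [← add_div, ← Finset.sum_add_distrib]
  refine div_le_div_of_nonneg_right (Finset.sum_le_sum fun i _ => ?_) n.cast_nonneg
  rw [Prod.map_iterate, Prod.map_apply, Prod.dist_eq]
  exact max_le_add_of_nonneg dist_nonneg dist_nonneg

theorem stmt2_general {X Y : Type*} [MetricSpace X] [CompactSpace X] [MetricSpace Y] [CompactSpace Y]
    (f : X → X) (g : Y → Y)
    (h1 : MeanErgodicShadowingAvg f) (h2 : MeanErgodicShadowingAvg g) :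
    MeanErgodicShadowingAvg (Prod.map f g) := by
  intro ε hε
  obtain ⟨δ₁, hδ₁, H₁⟩ := h1 (ε / 2) (half_pos hε)
  obtain ⟨δ₂, hδ₂, H₂⟩ := h2 (ε / 2) (half_pos hε)
  refine ⟨min δ₁ δ₂, lt_min hδ₁ hδ₂, fun ξ hξ => ?_⟩
  obtain ⟨p, hp⟩ := H₁ _ (hξ.mono (min_le_left δ₁ δ₂)).fst
  obtain ⟨q, hq⟩ := H₂ _ (hξ.mono (min_le_right δ₁ δ₂)).snd
  exact ⟨(p, q), add_halves ε ▸ hp.prodMap hq⟩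

theorem stmt2 {X Y : Type*} [MetricSpace X] [CompactSpace X] [MetricSpace Y] [CompactSpace Y]
    (f : X → X) (g : Y → Y) (hf : Continuous f) (hg : Continuous g)
    (h1 : MeanErgodicShadowingAvg f) (h2 : MeanErgodicShadowingAvg g) :
    MeanErgodicShadowingAvg (Prod.map f g) :=
  stmt2_general f g h1 h2
end

section
/- If a continuous map f on a compact metric space has mean ergodic shadowing, then for every integer k > 1 the iterate f^k has mean ergodic shadowing. -/
open Filter Metric

variable {X : Type*}

/-!
Given a `δ`-ergodic pseudo orbit `ξ` of `f^[k]`, fill in the `f`-orbit segments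
`ξ j, f (ξ j), …, f^[k-1] (ξ j)` between consecutive terms. The result is a `δ`-ergodic pseudo
orbit of `f`: its jumps sit only at indices `k j + k - 1`, one for each jump `j` of `ξ`, so its
bad set is no denser than that of `ξ`. A point `p` shadowing it in average within `ε / k` shadows
`ξ` for `f^[k]` in average within `ε`, since the terms at indices `k j` account for at most `k`
times the full average.
-/

lemma cnt_eq_card (E : Set ℕ) [DecidablePred (· ∈ E)] (n : ℕ) :
    cnt E n = ((Finset.range n).filter (· ∈ E)).card := by
  simp [cnt, Set.indicator_apply, Finset.sum_boole]

lemma cnt_le_cnt_of_injOn {B E : Set ℕ} {g : ℕ → ℕ} (hmaps : Set.MapsTo g B E)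
    (hle : ∀ i, g i ≤ i) (hinj : Set.InjOn g B) (n : ℕ) : cnt B n ≤ cnt E n := by
  classical
  rw [cnt_eq_card, cnt_eq_card]
  refine mod_cast Finset.card_le_card_of_injOn g (fun i hi => ?_) (hinj.mono fun i hi => ?_)
  · simp only [Finset.coe_filter, Finset.mem_range, Set.mem_ofPred_eq] at hi ⊢
    exact ⟨(hle i).trans_lt hi.1, hmaps hi.2⟩
  · exact (Finset.mem_filter.1 hi).2

lemma DensityZero.of_cnt_le {B E : Set ℕ} (hE : DensityZero E) (hle : ∀ n, cnt B n ≤ cnt E n) :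
    DensityZero B :=
  squeeze_zero (fun n => div_nonneg (Finset.sum_nonneg fun i _ => Set.indicator_nonneg
    (fun _ _ => zero_le_one) i) n.cast_nonneg) (fun n => div_le_div_of_nonneg_right (hle n)
    n.cast_nonneg) hE

lemma sum_range_comp_mul_le {a : ℕ → ℝ} (ha : ∀ i, 0 ≤ a i) {k : ℕ} (hk : 0 < k) (j : ℕ) :
    ∑ i ∈ Finset.range j, a (k * i) ≤ ∑ m ∈ Finset.range (k * j), a m := by
  rw [← Finset.sum_image (g := (k * ·)) fun _ _ _ _ h => Nat.eq_of_mul_eq_mul_left hk h]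
  refine Finset.sum_le_sum_of_subset_of_nonneg (fun m hm => ?_) fun m _ _ => ha m
  obtain ⟨i, hi, rfl⟩ := Finset.mem_image.1 hm
  exact Finset.mem_range.2 (Nat.mul_lt_mul_of_pos_left (Finset.mem_range.1 hi) hk)

lemma avg_comp_mul_le {a : ℕ → ℝ} (ha : ∀ i, 0 ≤ a i) {k : ℕ} (hk : 0 < k) (j : ℕ) :
    (∑ i ∈ Finset.range j, a (k * i)) / j ≤
      k * ((∑ m ∈ Finset.range (k * j), a m) / (k * j : ℕ)) := by
  have hk' : (k : ℝ) ≠ 0 := by positivity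
  rw [Nat.cast_mul, mul_div_assoc', mul_div_mul_left _ _ hk']
  exact div_le_div_of_nonneg_right (sum_range_comp_mul_le ha hk j) j.cast_nonneg

lemma limsup_avg_comp_mul_lt {a : ℕ → ℝ} (ha : ∀ i, 0 ≤ a i) (hbdd : BddAbove (Set.range a))
    {k : ℕ} (hk : 0 < k) {c : ℝ}
    (h : limsup (fun n : ℕ => (∑ i ∈ Finset.range n, a i) / n) atTop < c) :
    limsup (fun j : ℕ => (∑ i ∈ Finset.range j, a (k * i)) / j) atTop < k * c := by
  obtain ⟨C, hC⟩ := hbdd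
  have havg_le : ∀ n : ℕ, (∑ i ∈ Finset.range n, a i) / n ≤ max C 0 := fun n => by
    refine div_le_of_le_mul₀ n.cast_nonneg (le_max_right _ _) ?_
    calc ∑ i ∈ Finset.range n, a i ≤ ∑ _i ∈ Finset.range n, max C 0 :=
          Finset.sum_le_sum fun i _ => (hC ⟨i, rfl⟩).trans (le_max_left _ _)
      _ = max C 0 * n := by rw [Finset.sum_const, Finset.card_range, nsmul_eq_mul, mul_comm]
  obtain ⟨c', hc', hc'c⟩ := exists_between h
  have hev : ∀ᶠ n : ℕ in atTop, (∑ i ∈ Finset.range n, a i) / n < c' :=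
    eventually_lt_of_limsup_lt hc' (isBoundedUnder_of_eventually_le (.of_forall havg_le))
  have hev' : ∀ᶠ j : ℕ in atTop, (∑ i ∈ Finset.range j, a (k * i)) / j ≤ k * c' :=
    ((tendsto_id.const_mul_atTop' hk).eventually hev).mono fun j hj =>
      (avg_comp_mul_le ha hk j).trans (mul_le_mul_of_nonneg_left hj.le k.cast_nonneg)
  calc limsup (fun j : ℕ => (∑ i ∈ Finset.range j, a (k * i)) / j) atTop ≤ k * c' :=
        limsup_le_of_le (isCoboundedUnder_le_of_le atTop fun j => div_nonneg
          (Finset.sum_nonneg fun i _ => ha _) j.cast_nonneg) hev'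
    _ < k * c := by gcongr

section FillOrbit

def fillOrbit (f : X → X) (k : ℕ) (ξ : ℕ → X) (i : ℕ) : X :=
  f^[i % k] (ξ (i / k))

variable {f : X → X} {k : ℕ} {ξ : ℕ → X}

lemma fillOrbit_mul_add (hk : 0 < k) (j : ℕ) {r : ℕ} (hr : r < k) :
    fillOrbit f k ξ (k * j + r) = f^[r] (ξ j) := by
  simp [fillOrbit, Nat.mod_eq_of_lt hr, Nat.mul_add_div hk, Nat.div_eq_of_lt hr]

lemma fillOrbit_mul (hk : 0 < k) (j : ℕ) : fillOrbit f k ξ (k * j) = ξ j := by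
  simpa using fillOrbit_mul_add (f := f) (ξ := ξ) hk j hk

lemma fillOrbit_jump [MetricSpace X] {δ : ℝ} (hδ : 0 < δ) (hk : 0 < k) {i : ℕ}
    (hi : δ ≤ dist (f (fillOrbit f k ξ i)) (fillOrbit f k ξ (i + 1))) :
    i + 1 = k * (i / k + 1) ∧ δ ≤ dist (f^[k] (ξ (i / k))) (ξ (i / k + 1)) := by
  have hdecomp : k * (i / k) + i % k = i := Nat.div_add_mod i k
  have hfi : f (fillOrbit f k ξ i) = f^[i % k + 1] (ξ (i / k)) :=
    (Function.iterate_succ_apply' f _ _).symm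
  have hmod : i % k + 1 ≤ k := Nat.mod_lt i hk
  rcases hmod.lt_or_eq with hlt | heq
  · have hnext : fillOrbit f k ξ (i + 1) = f^[i % k + 1] (ξ (i / k)) := by
      rw [fillOrbit_mul_add hk _ hlt |>.symm, ← add_assoc, hdecomp]
    rw [hfi, hnext, dist_self] at hi
    exact absurd hi hδ.not_ge
  · have hsucc : i + 1 = k * (i / k + 1) :=
      calc i + 1 = k * (i / k) + (i % k + 1) := by rw [← add_assoc, hdecomp]
        _ = k * (i / k + 1) := by rw [heq, mul_add_one]
    refine ⟨hsucc, ?_⟩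
    rwa [hfi, heq, hsucc, fillOrbit_mul hk] at hi

lemma ErgodicPseudoOrbit.fillOrbit [MetricSpace X] {δ : ℝ} (hδ : 0 < δ) (hk : 0 < k)
    (hξ : ErgodicPseudoOrbit (f^[k]) δ ξ) : ErgodicPseudoOrbit f δ (fillOrbit f k ξ) := by
  refine DensityZero.of_cnt_le hξ (cnt_le_cnt_of_injOn (g := (· / k))
    (fun i hi => (fillOrbit_jump hδ hk hi).2) (fun i => Nat.div_le_self i k) fun i hi j hj hij => ?_)
  have hi' := (fillOrbit_jump hδ hk hi).1
  have hj' := (fillOrbit_jump hδ hk hj).1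
  simp only at hij
  rw [hij, ← hj'] at hi'
  exact Nat.succ_injective hi'

lemma AvgShadows.of_fillOrbit [MetricSpace X] [BoundedSpace X] {c : ℝ} {p : X} (hk : 0 < k)
    (hp : AvgShadows f c p (fillOrbit f k ξ)) : AvgShadows (f^[k]) (k * c) p ξ := by
  have hbdd : BddAbove (Set.range fun i => dist (f^[i] p) (fillOrbit f k ξ i)) :=
    ⟨diam Set.univ, by
      rintro _ ⟨i, rfl⟩
      exact dist_le_diam_of_mem (Bornology.isBounded_univ.2 ‹_›) trivial trivial⟩
  simpa only [AvgShadows, fillOrbit_mul hk, Function.iterate_mul] using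
    limsup_avg_comp_mul_lt (fun _ => dist_nonneg) hbdd hk hp

end FillOrbit

theorem stmt3_general {X : Type*} [MetricSpace X] [CompactSpace X] (f : X → X)
    (h : MeanErgodicShadowingAvg f) :
    ∀ k : ℕ, 1 < k → MeanErgodicShadowingAvg (f^[k]) := by
  intro k hk ε hε
  have hk0 : 0 < k := by omega
  obtain ⟨δ, hδ, hshadow⟩ := h (ε / k) (by positivity)
  refine ⟨δ, hδ, fun ξ hξ => ?_⟩
  obtain ⟨p, hp⟩ := hshadow _ (hξ.fillOrbit hδ hk0)
  exact ⟨p, mul_div_cancel₀ ε (by positivity : (k : ℝ) ≠ 0) ▸ hp.of_fillOrbit hk0⟩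

theorem stmt3 {X : Type*} [MetricSpace X] [CompactSpace X] (f : X → X) (hf : Continuous f)
    (h : MeanErgodicShadowingAvg f) :
    ∀ k : ℕ, 1 < k → MeanErgodicShadowingAvg (f^[k]) :=
  stmt3_general f h
end

section
/- If a continuous map f on a compact metric space has ergodic shadowing, then f has mean ergodic shadowing. -/
open Filter Metric Topology

variable {X : Type*}

def ErgodicShadowing [MetricSpace X] (f : X → X) : Prop :=
  ∀ ε > 0, ∃ δ > 0, ∀ ξ : ℕ → X, ErgodicPseudoOrbit f δ ξ →
    ∃ p : X, DensityZero {i | ε ≤ dist (f^[i] p) (ξ i)}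

/-! A sequence bounded by `D` everywhere and by `η` outside a set `E` of density zero has
Cesàro averages at most `η + D · cnt E n / n`, so their limsup is at most `η`. Under ergodic
shadowing with precision `ε / 2`, the distances to the shadowed pseudo orbit are such a sequence,
with `D` the diameter of the compact space. -/

section CesaroAverage

variable {a : ℕ → ℝ} {E : Set ℕ} {η D : ℝ}

theorem sum_range_le_mul_add_cnt (hη : 0 ≤ η) (haD : ∀ i, a i ≤ D) (haη : ∀ i ∉ E, a i ≤ η)
    (n : ℕ) : ∑ i ∈ Finset.range n, a i ≤ n * η + D * cnt E n := by
  calc ∑ i ∈ Finset.range n, a i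
      ≤ ∑ i ∈ Finset.range n, (η + D * E.indicator (fun _ => (1 : ℝ)) i) := by
        refine Finset.sum_le_sum fun i _ => ?_
        by_cases hi : i ∈ E
        · rw [Set.indicator_of_mem hi]
          linarith [haD i]
        · rw [Set.indicator_of_notMem hi]
          linarith [haη i hi]
    _ = n * η + D * cnt E n := by
        rw [Finset.sum_add_distrib, ← Finset.mul_sum, cnt]
        simp

theorem average_le_add_mul_density (hη : 0 ≤ η) (haD : ∀ i, a i ≤ D)
    (haη : ∀ i ∉ E, a i ≤ η) (n : ℕ) :
    (∑ i ∈ Finset.range n, a i) / n ≤ η + D * (cnt E n / n) := by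
  rcases Nat.eq_zero_or_pos n with rfl | hn
  · simpa using hη
  have hn' : (0 : ℝ) < n := Nat.cast_pos.2 hn
  rw [div_le_iff₀ hn', add_mul, mul_assoc, div_mul_cancel₀ _ hn'.ne', mul_comm η]
  exact sum_range_le_mul_add_cnt hη haD haη n

theorem DensityZero.limsup_average_le (hE : DensityZero E) (ha : ∀ i, 0 ≤ a i) (hη : 0 ≤ η)
    (haD : ∀ i, a i ≤ D) (haη : ∀ i ∉ E, a i ≤ η) :
    limsup (fun n : ℕ => (∑ i ∈ Finset.range n, a i) / n) atTop ≤ η := by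
  have hbound : Tendsto (fun n : ℕ => η + D * (cnt E n / n)) atTop (𝓝 η) := by
    simpa using (hE.const_mul D).const_add η
  calc limsup (fun n : ℕ => (∑ i ∈ Finset.range n, a i) / n) atTop
      ≤ limsup (fun n : ℕ => η + D * (cnt E n / n)) atTop :=
        limsup_le_limsup (Eventually.of_forall (average_le_add_mul_density hη haD haη))
          (isCoboundedUnder_le_of_le atTop fun n => by
            have := Finset.sum_nonneg fun i (_ : i ∈ Finset.range n) => ha i
            positivity)
          hbound.isBoundedUnder_le
    _ = η := hbound.limsup_eq

end CesaroAverage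

theorem stmt6_general {X : Type*} [MetricSpace X] [CompactSpace X] (f : X → X)
    (h : ErgodicShadowing f) : MeanErgodicShadowingAvg f := by
  intro ε hε
  obtain ⟨δ, hδ, hshadow⟩ := h (ε / 2) (half_pos hε)
  refine ⟨δ, hδ, fun ξ hξ => ?_⟩
  obtain ⟨p, hp⟩ := hshadow ξ hξ
  refine ⟨p, lt_of_le_of_lt ?_ (half_lt_self hε)⟩
  exact hp.limsup_average_le (fun _ => dist_nonneg) (half_pos hε).le
    (fun _ => dist_le_diam_of_mem isCompact_univ.isBounded trivial trivial)
    (fun _ hi => (not_le.1 hi).le)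

theorem stmt6 {X : Type*} [MetricSpace X] [CompactSpace X] (f : X → X) (hf : Continuous f)
    (h : ErgodicShadowing f) : MeanErgodicShadowingAvg f :=
  stmt6_general f h
end

section
/- If a continuous map f on a compact metric space is chain transitive and has shadowing, then f is (topologically) transitive. -/
open Filter Metric

variable {X : Type*}

def ChainTransitive [MetricSpace X] (f : X → X) : Prop :=
  ∀ ε > 0, ∀ x y : X, ∃ n : ℕ, ∃ c : ℕ → X, c 0 = x ∧ c n = y ∧
    ∀ i < n, dist (f (c i)) (c (i + 1)) < ε

def TopTransitive [TopologicalSpace X] (f : X → X) : Prop :=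
  ∀ U V : Set X, IsOpen U → IsOpen V → U.Nonempty → V.Nonempty →
    ∃ n ≥ 1, (f^[n] '' U ∩ V).Nonempty

/-!
Given open `U ∋ x` and `V ∋ y`, take a fine chain from `x` to `y` (of positive length) and continue
it by the orbit of `y`. This infinite pseudo-orbit is shadowed by a true orbit, which therefore
starts in `U` and reaches `V` at the step where the chain ends.
-/

section FiniteChains

variable [MetricSpace X] {f : X → X} {δ : ℝ}

/-- Continuing a finite chain by the true orbit of its endpoint gives a pseudo-orbit. -/
lemma exists_pseudoOrbit_extending_chain (hδ : 0 < δ) {n : ℕ} {c : ℕ → X}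
    (hc : ∀ i < n, dist (f (c i)) (c (i + 1)) < δ) :
    ∃ ξ : ℕ → X, (∀ i, dist (f (ξ i)) (ξ (i + 1)) < δ) ∧ ∀ i ≤ n, ξ i = c i := by
  refine ⟨fun i => if i ≤ n then c i else f^[i - n] (c n), fun i => ?_, fun i hi => if_pos hi⟩
  rcases lt_trichotomy i n with hlt | rfl | hgt
  · simpa [hlt.le, Nat.succ_le_of_lt hlt] using hc i hlt
  · simpa using hδ
  · have hsucc : i + 1 - n = (i - n) + 1 := by omega
    simpa [hgt.not_ge, (Nat.lt_succ_of_lt hgt).not_ge, hsucc, Function.iterate_succ_apply']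
      using hδ

lemma Shadowing.exists_shadow_of_chain (hs : Shadowing f) {ε : ℝ} (hε : 0 < ε) :
    ∃ δ > 0, ∀ (n : ℕ) (c : ℕ → X), (∀ i < n, dist (f (c i)) (c (i + 1)) < δ) →
      ∃ p : X, ∀ i ≤ n, dist (f^[i] p) (c i) < ε := by
  obtain ⟨δ, hδ, hshadow⟩ := hs ε hε
  refine ⟨δ, hδ, fun n c hc => ?_⟩
  obtain ⟨ξ, hξ, hξc⟩ := exists_pseudoOrbit_extending_chain hδ hc
  obtain ⟨p, hp⟩ := hshadow ξ hξ
  exact ⟨p, fun i hi => hξc i hi ▸ hp i⟩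

/-- Prepend `x` to a chain from `f x`. -/
lemma ChainTransitive.exists_chain_succ (hct : ChainTransitive f) (hδ : 0 < δ) (x y : X) :
    ∃ (n : ℕ) (c : ℕ → X), c 0 = x ∧ c (n + 1) = y ∧
      ∀ i < n + 1, dist (f (c i)) (c (i + 1)) < δ := by
  obtain ⟨n, c, hc0, hcn, hc⟩ := hct δ hδ (f x) y
  refine ⟨n, fun i => Nat.casesOn i x c, rfl, hcn, fun i hi => ?_⟩
  cases i with
  | zero => simpa [hc0] using hδ
  | succ i => exact hc i (Nat.succ_lt_succ_iff.mp hi)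

end FiniteChains

theorem stmt9_general {X : Type*} [MetricSpace X] (f : X → X)
    (hct : ChainTransitive f) (hs : Shadowing f) : TopTransitive f := by
  intro U V hU hV ⟨x, hx⟩ ⟨y, hy⟩
  obtain ⟨εU, hεU, hballU⟩ := Metric.isOpen_iff.mp hU x hx
  obtain ⟨εV, hεV, hballV⟩ := Metric.isOpen_iff.mp hV y hy
  obtain ⟨δ, hδ, hshadow⟩ := hs.exists_shadow_of_chain (lt_min hεU hεV)
  obtain ⟨n, c, hc0, hcn, hc⟩ := hct.exists_chain_succ hδ x y
  obtain ⟨p, hp⟩ := hshadow (n + 1) c hc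
  refine ⟨n + 1, Nat.le_add_left 1 n, f^[n + 1] p, ⟨p, hballU ?_, rfl⟩, hballV ?_⟩
  · simpa [← hc0] using (hp 0 (Nat.zero_le _)).trans_le (min_le_left _ _)
  · simpa [← hcn] using (hp (n + 1) le_rfl).trans_le (min_le_right _ _)

theorem stmt9 {X : Type*} [MetricSpace X] [CompactSpace X] (f : X → X) (hf : Continuous f)
    (hct : ChainTransitive f) (hs : Shadowing f) : TopTransitive f :=
  stmt9_general f hct hs
end

section
/- Let X = C₁ ∪ C₂ be the disjoint union of two circles and f : X → X the map exchanging the circles, sending a point of angle θ on C₁ to the point of angle 2θ on C₂ and vice versa. Then f² is not chain transitive. -/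
open Filter Metric

variable {X : Type*}

attribute [local instance] Metric.metricSpaceSum

/-- The map exchanging two copies of the circle, doubling the angle. -/
noncomputable def circleExchange : Circle ⊕ Circle → Circle ⊕ Circle :=
  Sum.elim (fun z => Sum.inr (z * z)) (fun z => Sum.inl (z * z))

/-! The square of the exchange map preserves each circle, and the two circles lie at distance at
least `1` from each other, so a `1`-chain of the square starting on the first circle never reaches
the second one. -/


theorem mem_of_chain_of_mapsTo [MetricSpace X] {f : X → X} {S : Set X} {ε : ℝ}
    (hS : Set.MapsTo f S S) (hsep : ∀ x ∈ S, ∀ y ∉ S, ε ≤ dist x y) {c : ℕ → X} {n : ℕ}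
    (h0 : c 0 ∈ S) (hstep : ∀ i < n, dist (f (c i)) (c (i + 1)) < ε) :
    ∀ i ≤ n, c i ∈ S := by
  intro i hi
  induction i with
  | zero => exact h0
  | succ k ih =>
    by_contra hk
    exact (hstep k hi).not_ge (hsep _ (hS (ih (k.le_succ.trans hi))) _ hk)

theorem not_chainTransitive_of_mapsTo [MetricSpace X] {f : X → X} {S : Set X} {ε : ℝ}
    (hε : 0 < ε) (hS : Set.MapsTo f S S) (hsep : ∀ x ∈ S, ∀ y ∉ S, ε ≤ dist x y)
    {x y : X} (hx : x ∈ S) (hy : y ∉ S) : ¬ ChainTransitive f := by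
  intro h
  obtain ⟨n, c, rfl, rfl, hstep⟩ := h ε hε x y
  exact hy (mem_of_chain_of_mapsTo hS hsep hx hstep n le_rfl)

theorem one_le_dist_of_mem_range_inl {α β : Type*} [MetricSpace α] [MetricSpace β]
    {x y : α ⊕ β} (hx : x ∈ Set.range Sum.inl) (hy : y ∉ Set.range Sum.inl) : 1 ≤ dist x y := by
  obtain ⟨a, rfl⟩ := hx
  cases y with
  | inl a' => exact absurd ⟨a', rfl⟩ hy
  | inr b => exact Sum.one_le_dist_inl_inr

theorem mapsTo_circleExchange_sq_range_inl :
    Set.MapsTo (circleExchange^[2]) (Set.range Sum.inl) (Set.range Sum.inl) := by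
  rintro _ ⟨z, rfl⟩
  exact ⟨z * z * (z * z), by simp [circleExchange]⟩

theorem stmt11 : ¬ ChainTransitive (circleExchange^[2]) :=
  not_chainTransitive_of_mapsTo one_pos mapsTo_circleExchange_sq_range_inl
    (fun _ hx _ hy => one_le_dist_of_mem_range_inl hx hy)
    (Set.mem_range_self (1 : Circle)) (y := Sum.inr 1) (by simp)
end
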